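/- Suppose 0 is in the interior of the convex hull of vectors Z_1,...,Z_n ∈ R^p (in the sense that for every unit vector u there exists i with uᵀZ_i > 0 and j with uᵀZ_j < 0). Then the function λ ↦ ∑_{i=1}^n log(1+λᵀZ_i), defined on the open convex set D = {λ : 1+λᵀZ_i > 0 for all i}, attains its maximum over D, and any critical point λ satisfies ∑_i Z_i/(1+λᵀZ_i) = 0. -/

import Mathlib

open Finset
open RealInnerProductSpace

/-- Existence of the empirical likelihood Lagrange multiplier: if `0` lies in
the interior of the convex hull of `Z 1, …, Z n` (for every unit vector `u`
some `uᵀ Z i` is positive and some is negative), then the dual objective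
`λ ↦ ∑ log (1 + λᵀ Z i)` attains its supremum over the open convex set
`D = {λ | 1 + λᵀ Z i > 0 ∀ i}`, and any critical point of
`λ ↦ -∑ log (1 + λᵀ Z i)` in `D` satisfies `∑ Z i / (1 + λᵀ Z i) = 0`. -/
theorem stmt_3 (n d : ℕ) (hn : 0 < n) (Z : Fin n → EuclideanSpace ℝ (Fin d))
    (hhull : ∀ u : EuclideanSpace ℝ (Fin d), ‖u‖ = 1 →
      (∃ i, 0 < ⟪u, Z i⟫) ∧ (∃ j, ⟪u, Z j⟫ < 0))
    (D : Set (EuclideanSpace ℝ (Fin d)))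
    (hD : D = {l | ∀ i, 0 < 1 + ⟪l, Z i⟫}) :
    (∃ l₀ ∈ D, ∀ l ∈ D, ∑ i, Real.log (1 + ⟪l, Z i⟫) ≤
        ∑ i, Real.log (1 + ⟪l₀, Z i⟫)) ∧
    (∀ l ∈ D, fderiv ℝ (fun m => -∑ i, Real.log (1 + ⟪m, Z i⟫)) l = 0 →
      ∑ i, (1 + ⟪l, Z i⟫)⁻¹ • Z i = 0) := by
  subst hD
  constructor
  · haveI : Nonempty (Fin n) := ⟨⟨0, hn⟩⟩
    have hne : (Finset.univ : Finset (Fin n)).Nonempty := Finset.univ_nonempty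
    rcases Nat.eq_zero_or_pos d with hd | hd
    · -- trivial space
      subst hd
      have hinner : ∀ a b : EuclideanSpace ℝ (Fin 0), ⟪a, b⟫ = 0 := by
        intro a b; simp [PiLp.inner_apply]
      refine ⟨0, fun i => by simp [hinner], fun l hl => le_of_eq ?_⟩
      simp [hinner]
    -- d ≥ 1 : get a uniform negativity constant via compactness of the sphere
    obtain ⟨c, hcpos, hcprop⟩ : ∃ c : ℝ, 0 < c ∧
        ∀ u : EuclideanSpace ℝ (Fin d), ‖u‖ = 1 → ∃ j, ⟪u, Z j⟫ ≤ -c := by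
      obtain ⟨u₁, hu₁⟩ : ∃ u : EuclideanSpace ℝ (Fin d), ‖u‖ = 1 :=
        ⟨EuclideanSpace.single ⟨0, hd⟩ (1:ℝ), by simp [EuclideanSpace.norm_single]⟩
      set g : EuclideanSpace ℝ (Fin d) → ℝ :=
        fun u => Finset.univ.inf' hne (fun j => ⟪u, Z j⟫) with hg
      have hgc : Continuous g :=
        Continuous.finset_inf'_apply hne (fun j _ => continuous_id.inner continuous_const)
      have hsph : IsCompact (Metric.sphere (0 : EuclideanSpace ℝ (Fin d)) 1) := isCompact_sphere _ _
      have hsphne : (Metric.sphere (0 : EuclideanSpace ℝ (Fin d)) 1).Nonempty :=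
        ⟨u₁, by simpa [mem_sphere_zero_iff_norm] using hu₁⟩
      obtain ⟨u₀, hu₀s, hu₀max⟩ := hsph.exists_isMaxOn hsphne hgc.continuousOn
      have hu₀ : ‖u₀‖ = 1 := by simpa [mem_sphere_zero_iff_norm] using hu₀s
      have hgneg : g u₀ < 0 := by
        obtain ⟨j, hj⟩ := (hhull u₀ hu₀).2
        exact lt_of_le_of_lt (Finset.inf'_le _ (Finset.mem_univ j)) hj
      refine ⟨-g u₀, by linarith, ?_⟩
      intro u hu
      have humem : u ∈ Metric.sphere (0 : EuclideanSpace ℝ (Fin d)) 1 := by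
        simpa [mem_sphere_zero_iff_norm] using hu
      have hgu : g u ≤ g u₀ := hu₀max humem
      obtain ⟨j, hjm, hj⟩ := Finset.exists_mem_eq_inf' hne (fun j => ⟪u, Z j⟫)
      exact ⟨j, by rw [← hj]; linarith⟩
    -- D is bounded
    obtain ⟨R, hRpos, hbound⟩ : ∃ R : ℝ, 0 < R ∧
        ∀ l ∈ {l : EuclideanSpace ℝ (Fin d) | ∀ i, 0 < 1 + ⟪l, Z i⟫}, ‖l‖ ≤ R := by
      refine ⟨1 / c, by positivity, ?_⟩
      intro l hl
      by_cases h0 : l = 0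
      · simp [h0]; positivity
      · have hnl : 0 < ‖l‖ := norm_pos_iff.mpr h0
        have hun : ‖(‖l‖⁻¹ • l : EuclideanSpace ℝ (Fin d))‖ = 1 := by
          rw [norm_smul, norm_inv, norm_norm]
          field_simp
        obtain ⟨j, huz⟩ := hcprop _ hun
        have hlz : ⟪l, Z j⟫ = ‖l‖ * ⟪(‖l‖⁻¹ • l : EuclideanSpace ℝ (Fin d)), Z j⟫ := by
          rw [real_inner_smul_left]; field_simp
        have h1 : 0 < 1 + ⟪l, Z j⟫ := hl j
        rw [hlz] at h1
        rw [le_div_iff₀ hcpos]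
        nlinarith [mul_le_mul_of_nonneg_left huz hnl.le]
    -- uniform upper bound on factors
    obtain ⟨M, hM1, hfac⟩ : ∃ M : ℝ, 1 ≤ M ∧
        ∀ l ∈ {l : EuclideanSpace ℝ (Fin d) | ∀ i, 0 < 1 + ⟪l, Z i⟫},
          ∀ i, 1 + ⟪l, Z i⟫ ≤ M := by
      refine ⟨1 + R * ∑ i, ‖Z i‖, by
        have h0 : 0 ≤ R * ∑ i, ‖Z i‖ :=
          mul_nonneg hRpos.le (Finset.sum_nonneg fun i _ => norm_nonneg _)
        linarith, ?_⟩
      intro l hl i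
      have h1 : ⟪l, Z i⟫ ≤ ‖l‖ * ‖Z i‖ := real_inner_le_norm l (Z i)
      have h2 : ‖l‖ ≤ R := hbound l hl
      have h3 : ‖Z i‖ ≤ ∑ i, ‖Z i‖ := Finset.single_le_sum (f := fun i => ‖Z i‖)
        (fun i _ => norm_nonneg _) (Finset.mem_univ i)
      have h4 := norm_nonneg l
      have h5 := norm_nonneg (Z i)
      nlinarith
    have hMpow : 0 < M ^ (n - 1) := pow_pos (by linarith) _
    obtain ⟨δ, hδpos, hδ1, hδM⟩ : ∃ δ : ℝ, 0 < δ ∧ δ ≤ 1 ∧ δ * M ^ (n - 1) ≤ 1 / 2 := by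
      refine ⟨min 1 ((2 * M ^ (n - 1))⁻¹), lt_min one_pos (by positivity), min_le_left _ _, ?_⟩
      have h : min 1 ((2 * M ^ (n - 1))⁻¹) ≤ (2 * M ^ (n - 1))⁻¹ := min_le_right _ _
      rw [mul_inv] at h
      calc min 1 ((2 * M ^ (n - 1))⁻¹) * M ^ (n - 1)
          ≤ (2:ℝ)⁻¹ * (M ^ (n-1))⁻¹ * M ^ (n - 1) := by
            rw [mul_inv]; exact mul_le_mul_of_nonneg_right h hMpow.le
        _ = 1 / 2 := by field_simp
    -- compact set K
    set K : Set (EuclideanSpace ℝ (Fin d)) :=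
      {l | ∀ i, δ ≤ 1 + ⟪l, Z i⟫} ∩ Metric.closedBall 0 R with hK
    have hKsub : K ⊆ {l : EuclideanSpace ℝ (Fin d) | ∀ i, 0 < 1 + ⟪l, Z i⟫} :=
      fun l hl i => lt_of_lt_of_le hδpos (hl.1 i)
    have hKclosed : IsClosed {l : EuclideanSpace ℝ (Fin d) | ∀ i, δ ≤ 1 + ⟪l, Z i⟫} := by
      have h : {l : EuclideanSpace ℝ (Fin d) | ∀ i, δ ≤ 1 + ⟪l, Z i⟫}
          = ⋂ i, {l | δ ≤ 1 + ⟪l, Z i⟫} := by ext x; simp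
      rw [h]
      exact isClosed_iInter fun i => isClosed_le continuous_const
        (continuous_const.add (continuous_id.inner continuous_const))
    have hKc : IsCompact K := (isCompact_closedBall 0 R).inter_left hKclosed
    have h0K : (0 : EuclideanSpace ℝ (Fin d)) ∈ K := by
      constructor
      · intro i; simp [hδ1]
      · simpa [Metric.mem_closedBall] using hRpos.le
    have hfc : ContinuousOn (fun l : EuclideanSpace ℝ (Fin d) =>
        ∑ i, Real.log (1 + ⟪l, Z i⟫)) K := by
      apply continuousOn_finset_sum
      intro i _
      apply ContinuousOn.log
      · exact (continuous_const.add (continuous_id.inner continuous_const)).continuousOn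
      · intro l hl
        exact ne_of_gt (lt_of_lt_of_le hδpos (hl.1 i))
    obtain ⟨l₀, hl₀K, hmax⟩ := hKc.exists_isMaxOn ⟨0, h0K⟩ hfc
    refine ⟨l₀, hKsub hl₀K, ?_⟩
    have hf0 : (0:ℝ) ≤ ∑ i, Real.log (1 + ⟪l₀, Z i⟫) := by
      have := hmax h0K
      simpa using this
    intro l hl
    by_cases hlK : l ∈ K
    · exact hmax hlK
    · have hball : l ∈ Metric.closedBall (0 : EuclideanSpace ℝ (Fin d)) R := by
        simpa [Metric.mem_closedBall] using hbound l hl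
      have hex : ∃ i, 1 + ⟪l, Z i⟫ < δ := by
        by_contra hcon
        push_neg at hcon
        exact hlK ⟨fun i => hcon i, hball⟩
      obtain ⟨i, hi⟩ := hex
      have hpos : ∀ j, 0 < 1 + ⟪l, Z j⟫ := hl
      have hlog : ∑ j, Real.log (1 + ⟪l, Z j⟫) = Real.log (∏ j, (1 + ⟪l, Z j⟫)) :=
        (Real.log_prod (fun j _ => ne_of_gt (hpos j))).symm
      have hprodbound : (∏ j, (1 + ⟪l, Z j⟫)) ≤ 1 := by
        have hsplit : (∏ j, (1 + ⟪l, Z j⟫))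
            = (1 + ⟪l, Z i⟫) * ∏ j ∈ Finset.univ.erase i, (1 + ⟪l, Z j⟫) :=
          (Finset.mul_prod_erase _ _ (Finset.mem_univ i)).symm
        have herase : (∏ j ∈ Finset.univ.erase i, (1 + ⟪l, Z j⟫)) ≤ M ^ (n - 1) := by
          calc (∏ j ∈ Finset.univ.erase i, (1 + ⟪l, Z j⟫))
              ≤ ∏ j ∈ Finset.univ.erase i, M :=
                Finset.prod_le_prod (fun j _ => (hpos j).le) (fun j _ => hfac l hl j)
            _ = M ^ (n - 1) := by
                rw [Finset.prod_const, Finset.card_erase_of_mem (Finset.mem_univ i)]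
                simp
        have herasenn : 0 ≤ ∏ j ∈ Finset.univ.erase i, (1 + ⟪l, Z j⟫) :=
          Finset.prod_nonneg (fun j _ => (hpos j).le)
        calc (∏ j, (1 + ⟪l, Z j⟫))
            = (1 + ⟪l, Z i⟫) * ∏ j ∈ Finset.univ.erase i, (1 + ⟪l, Z j⟫) := hsplit
          _ ≤ δ * M ^ (n - 1) := mul_le_mul hi.le herase herasenn hδpos.le
          _ ≤ 1 / 2 := hδM
          _ ≤ 1 := by norm_num
      have hle : ∑ j, Real.log (1 + ⟪l, Z j⟫) ≤ 0 := by
        rw [hlog]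
        exact Real.log_nonpos (Finset.prod_nonneg fun j _ => (hpos j).le) hprodbound
      linarith
  · intro l hl hcrit
    set c : Fin n → ℝ := fun i => (1 + ⟪l, Z i⟫)⁻¹ with hc
    have hder : ∀ i : Fin n, HasFDerivAt (fun m : EuclideanSpace ℝ (Fin d) => Real.log (1 + ⟪m, Z i⟫))
        (c i • (innerSL ℝ (Z i))) l := by
      intro i
      have h1 : HasFDerivAt (fun m : EuclideanSpace ℝ (Fin d) => 1 + ⟪m, Z i⟫) (innerSL ℝ (Z i)) l := by
        have h0 := (innerSL ℝ (Z i)).hasFDerivAt (x := l)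
        have heq : (fun m : EuclideanSpace ℝ (Fin d) => 1 + ⟪m, Z i⟫) = fun m => 1 + (innerSL ℝ (Z i)) m := by
          funext m
          congr 1
          rw [innerSL_apply_apply]; exact (real_inner_comm m (Z i)).symm
        rw [heq]; simpa using h0.const_add 1
      exact h1.log (ne_of_gt (hl i))
    have hsum : HasFDerivAt (fun m : EuclideanSpace ℝ (Fin d) => ∑ i, Real.log (1 + ⟪m, Z i⟫))
        (∑ i, c i • innerSL ℝ (Z i)) l := HasFDerivAt.fun_sum (fun i _ => hder i)
    have hF := hsum.fun_neg.fderiv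
    rw [hcrit] at hF
    have hzero : (∑ i, c i • innerSL ℝ (Z i)) = 0 := by
      have := hF.symm
      rwa [neg_eq_zero] at this
    set v : EuclideanSpace ℝ (Fin d) := ∑ i, c i • Z i with hv
    have hvv : ⟪v, v⟫ = 0 := by
      have h2 : ∑ i, c i * ⟪Z i, v⟫ = 0 := by
        have h3 := congrArg (fun T : EuclideanSpace ℝ (Fin d) →L[ℝ] ℝ => T v) hzero
        simpa only [ContinuousLinearMap.sum_apply, ContinuousLinearMap.coe_smul',
          Pi.smul_apply, innerSL_apply_apply, ContinuousLinearMap.zero_apply, smul_eq_mul] using h3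
      rw [hv, sum_inner]
      simp only [real_inner_smul_left]
      exact h2
    exact inner_self_eq_zero.mp hvv
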